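/- arXiv:2401.03734 — 3 statements merged into one kernel-verified Lean document; each statement's English description precedes it below -/
import Mathlib

section
/- For a discrete random utility U with distribution p on a finite set of values, the system of mixed-integer constraints (with indicator variables λ(u), λ̄(u) ∈ {0,1}, continuous variables ρ(u), ρ̄(u) ∈ [0,1], η ∈ ℝ, big-M constant M exceeding the range of utilities, and ε strictly smaller than the minimum positive gap between distinct utility values): η − u ≤ Mλ(u); η − u ≥ (M+ε)λ(u) − M; η − u ≤ (M+ε)λ̄(u) − ε; η − u ≥ M(λ̄(u)−1); ρ̄(u) ≤ λ̄(u); p(u) − (1−λ(u)) ≤ ρ(u) ≤ λ(u); ρ(u) ≤ ρ̄(u) ≤ p(u); Σ_u ρ̄(u) = α — forces λ(u) = 1 if and only if u < η, and λ̄(u) = 0 implies u > η. -/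
/-- The CVaR mixed-integer constraint system forces the indicator variables to behave as
intended: `λ(u) = 1` if and only if `u < η`, and `λ̄(u) = 0` implies `u > η`. -/
theorem stmt5 (U : Finset ℝ) (p : ℝ → ℝ) (α M ε η : ℝ)
    (l lb r rb : ℝ → ℝ)
    (hp0 : ∀ u ∈ U, 0 ≤ p u) (hp1 : ∑ u ∈ U, p u = 1)
    (hα : α ∈ Set.Ioc (0:ℝ) 1)
    (hM : ∀ u ∈ U, |η - u| ≤ M)
    (hMrange : ∀ u ∈ U, ∀ u' ∈ U, |u - u'| ≤ M)
    (hε : 0 < ε)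
    (hgap : ∀ u ∈ U, ∀ u' ∈ U, u ≠ u' → ε < |u - u'|)
    (hl : ∀ u ∈ U, l u = 0 ∨ l u = 1)
    (hlb : ∀ u ∈ U, lb u = 0 ∨ lb u = 1)
    (hr : ∀ u ∈ U, r u ∈ Set.Icc (0:ℝ) 1)
    (hrb : ∀ u ∈ U, rb u ∈ Set.Icc (0:ℝ) 1)
    (c1 : ∀ u ∈ U, η - u ≤ M * l u)
    (c2 : ∀ u ∈ U, η - u ≥ (M + ε) * l u - M)
    (c3 : ∀ u ∈ U, η - u ≤ (M + ε) * lb u - ε)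
    (c4 : ∀ u ∈ U, η - u ≥ M * (lb u - 1))
    (c5 : ∀ u ∈ U, rb u ≤ lb u)
    (c6 : ∀ u ∈ U, p u - (1 - l u) ≤ r u ∧ r u ≤ l u)
    (c7 : ∀ u ∈ U, r u ≤ rb u ∧ rb u ≤ p u)
    (c8 : ∑ u ∈ U, rb u = α) :
    ∀ u ∈ U, (l u = 1 ↔ u < η) ∧ (lb u = 0 → η < u) := by
  intro u hu
  refine ⟨⟨fun h1 => ?_, fun h2 => ?_⟩, fun h0 => ?_⟩
  · have := c2 u hu
    rw [h1] at this
    linarith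
  · rcases hl u hu with h | h
    · have := c1 u hu
      rw [h] at this
      linarith
    · exact h
  · have := c3 u hu
    rw [h0] at this
    linarith
end

section
/- Let G be a DAG on nodes N and let topologically ordered clusters be constructed as follows (the reverse-topological RJT construction): process nodes in reverse topological order; the root cluster C_j of node j consists of j together with all nodes k with k before j in the topological order that are either parents of j or that belong to the root cluster C_l of some node l after j with k ∈ C_l ∖ {l}. Then the resulting tree of clusters (each C_j attached to the root cluster of the latest-ordered node in C_j ∖ {j}) satisfies the running intersection property. -/
/-- The reverse-topological RJT construction satisfies the running intersection property.
Nodes `N` carry a (topological) linear order, parents come earlier (`hI`).  The clusters are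
built in reverse topological order: `C j` consists of `j` together with all `k` before `j`
that are either parents of `j` or belong to `C l ∖ {l}` for some `l` after `j` (`hC`).  Each
cluster `C j` is attached to the root cluster of the latest-ordered node `par j` of
`C j ∖ {j}` (`hpar`).  The running intersection property then holds, in the equivalent
"gradual" form for a rooted tree: any node `x ∈ C j` with `x ≠ j` also belongs to the parent
cluster `C (par j)` (so the clusters containing `x` form a connected subtree rooted at
`C x`). -/
theorem stmt11 {N : Type*} [Fintype N] [LinearOrder N] [DecidableEq N]
    (I : N → Finset N) (hI : ∀ j, ∀ k ∈ I j, k < j)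
    (C : N → Finset N)
    (hC : ∀ j k, k ∈ C j ↔ k = j ∨ (k < j ∧ (k ∈ I j ∨ ∃ l, j < l ∧ k ∈ C l ∧ k ≠ l)))
    (par : N → N)
    (hpar : ∀ j, ((C j).erase j).Nonempty →
      par j ∈ (C j).erase j ∧ ∀ k ∈ (C j).erase j, k ≤ par j) :
    ∀ j x, x ∈ C j → x ≠ j → ((C j).erase j).Nonempty ∧ x ∈ C (par j) := by
  intro j x hx hxj
  have hxe : x ∈ (C j).erase j := Finset.mem_erase.2 ⟨hxj, hx⟩
  have hne : ((C j).erase j).Nonempty := ⟨x, hxe⟩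
  refine ⟨hne, ?_⟩
  obtain ⟨hpm, hmax⟩ := hpar j hne
  obtain ⟨hpj, hpC⟩ := Finset.mem_erase.1 hpm
  have hple : x ≤ par j := hmax x hxe
  rcases eq_or_lt_of_le hple with heq | hlt
  · exact (hC (par j) x).2 (Or.inl heq)
  · have hplt : par j < j := by
      rcases (hC j (par j)).1 hpC with h | h
      · exact absurd h hpj
      · exact h.1
    exact (hC (par j) x).2 (Or.inr ⟨hlt, Or.inr ⟨j, hplt, hx, hxj⟩⟩)
end

section
/- Adding a node x to every cluster on the undirected path between two clusters C_a and C_b of a tree of clusters that already satisfies the running intersection property, where x already belongs to C_a and the clusters containing x previously formed a connected subtree including C_a, yields a tree of clusters that still satisfies the running intersection property. -/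
/-! In a tree the path between two vertices is unique, so it stays inside every vertex set
that induces a connected subgraph containing both ends; for `x` the new occurrence set is the
union of the old one with the support of `p`, two connected sets meeting at `a`, while the
occurrence sets of all other nodes are unchanged. -/

namespace SimpleGraph

variable {V : Type*} {G : SimpleGraph V}

theorem IsAcyclic.mem_of_mem_support_of_preconnected_induce (hG : G.IsAcyclic) {s : Set V}
    (hs : (G.induce s).Preconnected) {u v : V} (hu : u ∈ s) (hv : v ∈ s) (q : G.Walk u v)
    (hq : q.IsPath) {w : V} (hw : w ∈ q.support) : w ∈ s := by
  classical
  obtain ⟨r⟩ := hs ⟨u, hu⟩ ⟨v, hv⟩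
  let r' : G.Walk u v := r.map (Embedding.induce s).toHom
  have hr' : ∀ z ∈ r'.support, z ∈ s := by
    intro z hz
    obtain ⟨⟨z, hzs⟩, -, rfl⟩ := List.mem_map.mp (r.support_map _ ▸ hz)
    exact hzs
  have hq_eq : q = r'.bypass := congrArg Subtype.val <|
    (hG.subsingleton_path u v).elim ⟨q, hq⟩ ⟨r'.bypass, r'.bypass_isPath⟩
  exact hr' w (r'.support_bypass_subset_support (hq_eq ▸ hw))

end SimpleGraph

theorem Set.mem_ite_insert_iff {α : Type*} {P : Prop} [Decidable P] {x n : α} {s : Set α} :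
    n ∈ (if P then insert x s else s) ↔ n = x ∧ P ∨ n ∈ s := by
  split_ifs <;> simp [*]

theorem stmt13_general {V N : Type*} [DecidableEq V] (G : SimpleGraph V) (hT : G.IsTree)
    (C : V → Set N)
    (RIP : ∀ (u v w : V) (q : G.Walk u v), q.IsPath → w ∈ q.support → C u ∩ C v ⊆ C w)
    (x : N) (a b : V) (hxa : x ∈ C a)
    -- the clusters containing `x` form a connected subtree including `C a`
    (hconn : (G.induce {v : V | x ∈ C v}).Connected)
    (p : G.Walk a b)
    (C' : V → Set N)
    (hC' : ∀ v, C' v = if v ∈ p.support then insert x (C v) else C v) :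
    ∀ (u v w : V) (q : G.Walk u v), q.IsPath → w ∈ q.support → C' u ∩ C' v ⊆ C' w := by
  have mem_C' : ∀ n t, n ∈ C' t ↔ n = x ∧ t ∈ p.support ∨ n ∈ C t := fun n t => by
    rw [hC', Set.mem_ite_insert_iff]
  intro u v w q hq hw n ⟨hnu, hnv⟩
  by_cases hnx : n = x
  · subst hnx
    have hocc : {t | n ∈ C' t} = {t | n ∈ C t} ∪ {t | t ∈ p.support} := by
      ext t
      simp only [mem_C', true_and, Set.mem_union, Set.mem_ofPred_eq, or_comm]
    have hconn' : (G.induce {t | n ∈ C' t}).Preconnected := hocc ▸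
      (SimpleGraph.induce_union_connected hconn.preconnected
        p.connected_induce_support.preconnected ⟨a, hxa, p.start_mem_support⟩).preconnected
    exact hT.isAcyclic.mem_of_mem_support_of_preconnected_induce hconn' hnu hnv q hq hw
  · simp only [mem_C', hnx, false_and, false_or] at hnu hnv ⊢
    exact RIP u v w q hq hw ⟨hnu, hnv⟩

/-- Adding a node `x` to every cluster on the undirected path `p` between two clusters `C a`
and `C b` of a tree of clusters satisfying the running intersection property, where `x`
already belongs to `C a` (so that the clusters containing `x` previously formed a connected
subtree including `C a`, a consequence of the running intersection property), yields a tree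
of clusters that still satisfies the running intersection property. -/
theorem stmt13 {V N : Type*} [DecidableEq V] (G : SimpleGraph V) (hT : G.IsTree)
    (C : V → Set N)
    (RIP : ∀ (u v w : V) (q : G.Walk u v), q.IsPath → w ∈ q.support → C u ∩ C v ⊆ C w)
    (x : N) (a b : V) (hxa : x ∈ C a)
    -- the clusters containing `x` form a connected subtree including `C a`
    (hconn : (G.induce {v : V | x ∈ C v}).Connected)
    (p : G.Walk a b) (hp : p.IsPath)
    (C' : V → Set N)
    (hC' : ∀ v, C' v = if v ∈ p.support then insert x (C v) else C v) :
    ∀ (u v w : V) (q : G.Walk u v), q.IsPath → w ∈ q.support → C' u ∩ C' v ⊆ C' w :=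
  stmt13_general G hT C RIP x a b hxa hconn p C' hC'
end
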